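/- arXiv:1308.6762 — 2 statements merged into one kernel-verified Lean document; each statement's English description precedes it below -/
import Mathlib

section
/- Let D = (A, B) ⊂ ℝ be a bounded open interval with A < y < ∞, and suppose u : [A, B) → [0, ∞) is C² on (A, B), continuous at A, and satisfies u'' = 4u² on (A, B), u(A) = 0, and u(x) → ∞ as x → B⁻. Then for every x ∈ (A, B), ∫₀^{u(x)} du/√((8/3)u³ + C) = x − A, where C = (u'(A))² ≥ 0; in particular u is strictly increasing on (A, B). -/
open MeasureTheory Set Filter Topology

/-!
Multiplying `u'' = 4u²` by `u'` gives the first integral `u'² = (8/3)u³ + u'(A)²`.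
Since `u` is convex, nonnegative and vanishes at `A`, `u' ≥ 0`; and `u'(A) ≠ 0`, for otherwise
Gronwall's inequality applied to `u + u'` forces `u ≡ 0`, contradicting the blow-up at `B`.
Hence `u' = √((8/3)u³ + u'(A)²) > 0`, and separating variables gives the integral identity.
-/

section Calculus

variable {A B : ℝ}

lemma monotoneOn_Ioo_of_hasDerivAt_nonneg {f f' : ℝ → ℝ}
    (hf : ∀ x ∈ Ioo A B, HasDerivAt f (f' x) x) (hf' : ∀ x ∈ Ioo A B, 0 ≤ f' x) :
    MonotoneOn f (Ioo A B) :=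
  monotoneOn_of_hasDerivWithinAt_nonneg (convex_Ioo A B)
    (fun x hx => (hf x hx).continuousAt.continuousWithinAt)
    (by simpa only [interior_Ioo] using fun x hx => (hf x hx).hasDerivWithinAt)
    (by simpa only [interior_Ioo] using hf')

lemma strictMonoOn_Ioo_of_hasDerivAt_pos {f f' : ℝ → ℝ}
    (hf : ∀ x ∈ Ioo A B, HasDerivAt f (f' x) x) (hf' : ∀ x ∈ Ioo A B, 0 < f' x) :
    StrictMonoOn f (Ioo A B) :=
  strictMonoOn_of_hasDerivWithinAt_pos (convex_Ioo A B)
    (fun x hx => (hf x hx).continuousAt.continuousWithinAt)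
    (by simpa only [interior_Ioo] using fun x hx => (hf x hx).hasDerivWithinAt)
    (by simpa only [interior_Ioo] using hf')

lemma eqOn_zero_of_norm_deriv_le {E : Type*} [NormedAddCommGroup E] [NormedSpace ℝ E]
    {f f' : ℝ → E} {K : ℝ} (hf : ∀ x ∈ Ioo A B, HasDerivAt f (f' x) x)
    (hbound : ∀ x ∈ Ioo A B, ‖f' x‖ ≤ K * ‖f x‖) (hlim : Tendsto f (𝓝[>] A) (𝓝 0)) :
    EqOn f 0 (Ioo A B) := by
  intro x hx
  have hgronwall : ∀ a ∈ Ioo A x, ‖f x‖ ≤ ‖f a‖ * Real.exp (K * (x - a)) := by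
    intro a ha
    have hsub : Icc a x ⊆ Ioo A B := Icc_subset_Ioo ha.1 hx.2
    simpa only [gronwallBound_ε0] using norm_le_gronwallBound_of_norm_deriv_right_le (ε := 0)
      (fun y hy => (hf y (hsub hy)).continuousAt.continuousWithinAt)
      (fun y hy => (hf y (hsub (Ico_subset_Icc_self hy))).hasDerivWithinAt) le_rfl
      (fun y hy => by rw [add_zero]; exact hbound y (hsub (Ico_subset_Icc_self hy))) x
      ⟨ha.2.le, le_rfl⟩
  have hbound_lim : Tendsto (fun a => ‖f a‖ * Real.exp (K * (x - a))) (𝓝[>] A) (𝓝 0) := by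
    have hexp :
        Tendsto (fun a => Real.exp (K * (x - a))) (𝓝[>] A) (𝓝 (Real.exp (K * (x - A)))) :=
      (Continuous.tendsto (by fun_prop) A).mono_left nhdsWithin_le_nhds
    simpa using hlim.norm.mul hexp
  refine norm_le_zero_iff.1 (ge_of_tendsto hbound_lim ?_)
  filter_upwards [Ioo_mem_nhdsGT hx.1] with a ha using hgronwall a ha

lemma eqOn_of_hasDerivAt_zero_of_tendsto {E : Type*} [NormedAddCommGroup E] [NormedSpace ℝ E]
    {g : ℝ → E} {L : E} (hg : ∀ x ∈ Ioo A B, HasDerivAt g 0 x)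
    (hlim : Tendsto g (𝓝[>] A) (𝓝 L)) : EqOn g (fun _ => L) (Ioo A B) := by
  intro x hx
  have h := eqOn_zero_of_norm_deriv_le (f := fun y => g y - L) (K := 0)
    (fun y hy => (hg y hy).sub_const L) (by simp) (by simpa using hlim.sub_const L) hx
  exact sub_eq_zero.1 h

lemma hasDerivAt_integral_of_continuousOn {E : Type*} [NormedAddCommGroup E] [NormedSpace ℝ E]
    [CompleteSpace E] {f : ℝ → E} {S : Set ℝ} {a b : ℝ} (hS : IsOpen S) (hf : ContinuousOn f S)
    (hab : uIcc a b ⊆ S) : HasDerivAt (fun r => ∫ t in a..r, f t) (f b) b :=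
  have hb : b ∈ S := hab right_mem_uIcc
  intervalIntegral.integral_hasDerivAt_right ((hf.mono hab).intervalIntegrable)
    (hf.stronglyMeasurableAtFilter hS b hb) (hf.continuousAt (hS.mem_nhds hb))

lemma integral_one_div_eq_sub_of_hasDerivAt_comp {u φ : ℝ → ℝ} {S : Set ℝ} (hS : IsOpen S)
    (hφ : ContinuousOn φ S) (hφ0 : ∀ t ∈ S, φ t ≠ 0)
    (hu : ∀ x ∈ Ioo A B, HasDerivAt u (φ (u x)) x) (huS : ∀ x ∈ Ioo A B, uIcc 0 (u x) ⊆ S)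
    (h0 : (0 : ℝ) ∈ S) (hulim : Tendsto u (𝓝[>] A) (𝓝 0)) :
    ∀ x ∈ Ioo A B, ∫ t in (0 : ℝ)..(u x), 1 / φ t = x - A := by
  set Φ := fun r => ∫ t in (0 : ℝ)..r, 1 / φ t
  have hΦ : ∀ s, uIcc 0 s ⊆ S → HasDerivAt Φ (1 / φ s) s := fun s hs =>
    hasDerivAt_integral_of_continuousOn hS (continuousOn_const.div hφ hφ0) hs
  have hderiv : ∀ x ∈ Ioo A B, HasDerivAt (fun y => Φ (u y) - (y - A)) 0 x := by
    intro x hx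
    have hφx := hφ0 _ (huS x hx right_mem_uIcc)
    have h := ((hΦ _ (huS x hx)).comp x (hu x hx)).sub ((hasDerivAt_id x).sub_const A)
    rwa [one_div_mul_cancel hφx, sub_self] at h
  have hlim : Tendsto (fun y => Φ (u y) - (y - A)) (𝓝[>] A) (𝓝 0) := by
    have hΦ0 : Tendsto Φ (𝓝 0) (𝓝 (Φ 0)) :=
      (hΦ 0 (by simpa using h0)).continuousAt.tendsto
    have hid : Tendsto (fun y : ℝ => y - A) (𝓝[>] A) (𝓝 (A - A)) :=
      ((continuous_sub_right A).tendsto A).mono_left nhdsWithin_le_nhds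
    simpa [Φ] using (hΦ0.comp hulim).sub hid
  intro x hx
  exact sub_eq_zero.1 (eqOn_of_hasDerivAt_zero_of_tendsto hderiv hlim hx)

end Calculus

section QuadraticODE

variable {A B : ℝ} {u v : ℝ → ℝ}

lemma nonneg_deriv_of_monotoneOn_of_tendsto_zero (hu : ∀ x ∈ Ioo A B, HasDerivAt u (v x) x)
    (hv : MonotoneOn v (Ioo A B)) (hu0 : ∀ x ∈ Ioo A B, 0 ≤ u x)
    (hulim : Tendsto u (𝓝[>] A) (𝓝 0)) : ∀ x ∈ Ioo A B, 0 ≤ v x := by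
  intro x hx
  by_contra! hneg
  have hsub : Ioo A x ⊆ Ioo A B := Ioo_subset_Ioo_right hx.2.le
  have hanti : StrictMonoOn (-u) (Ioo A x) :=
    strictMonoOn_Ioo_of_hasDerivAt_pos (fun y hy => (hu y (hsub hy)).neg)
      (fun y hy => neg_pos.2 ((hv (hsub hy) hx hy.2.le).trans_lt hneg))
  obtain ⟨y, hAy, hyx⟩ := exists_between hx.1
  obtain ⟨z, hyz, hzx⟩ := exists_between hyx
  have hy_nonpos : u y ≤ 0 := by
    refine ge_of_tendsto hulim ?_
    filter_upwards [Ioo_mem_nhdsGT hAy] with w hw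
    exact neg_le_neg_iff.1 (hanti.monotoneOn ⟨hw.1, hw.2.trans hyx⟩ ⟨hAy, hyx⟩ hw.2.le)
  have hzy : -u y < -u z := hanti ⟨hAy, hyx⟩ ⟨hAy.trans hyz, hzx⟩ hyz
  linarith [hu0 z (hsub ⟨hAy.trans hyz, hzx⟩)]

lemma sq_eq_cube_add_sq {c : ℝ} (hu : ∀ x ∈ Ioo A B, HasDerivAt u (v x) x)
    (hv : ∀ x ∈ Ioo A B, HasDerivAt v (4 * u x ^ 2) x) (hulim : Tendsto u (𝓝[>] A) (𝓝 0))
    (hvlim : Tendsto v (𝓝[>] A) (𝓝 c)) : ∀ x ∈ Ioo A B, v x ^ 2 = 8 / 3 * u x ^ 3 + c ^ 2 := by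
  have hderiv : ∀ y ∈ Ioo A B, HasDerivAt (fun y => v y ^ 2 - 8 / 3 * u y ^ 3) 0 y := by
    intro y hy
    refine (((hv y hy).pow 2).sub (((hu y hy).pow 3).const_mul (8 / 3))).congr_deriv ?_
    push_cast
    ring
  have hlim : Tendsto (fun y => v y ^ 2 - 8 / 3 * u y ^ 3) (𝓝[>] A) (𝓝 (c ^ 2)) := by
    simpa using (hvlim.pow 2).sub ((hulim.pow 3).const_mul (8 / 3))
  intro x hx
  have h := eqOn_of_hasDerivAt_zero_of_tendsto hderiv hlim hx
  simp only at h
  linarith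

lemma eqOn_zero_of_tendsto_zero (hu : ∀ x ∈ Ioo A B, HasDerivAt u (v x) x)
    (hv : ∀ x ∈ Ioo A B, HasDerivAt v (4 * u x ^ 2) x) (hu0 : ∀ x ∈ Ioo A B, 0 ≤ u x)
    (hv0 : ∀ x ∈ Ioo A B, 0 ≤ v x)
    (hulim : Tendsto u (𝓝[>] A) (𝓝 0)) (hvlim : Tendsto v (𝓝[>] A) (𝓝 0)) :
    EqOn u 0 (Ioo A B) := by
  intro x hx
  obtain ⟨y, hxy, hyB⟩ := exists_between hx.2
  have hsub : Ioo A y ⊆ Ioo A B := Ioo_subset_Ioo_right hyB.le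
  have hmono : MonotoneOn u (Ioo A B) := monotoneOn_Ioo_of_hasDerivAt_nonneg hu hv0
  -- `u ≤ u y` on `(A, y)` makes `(u + v)' = v + 4u²` at most `(1 + 4 u y) (u + v)` there.
  have hbound : ∀ z ∈ Ioo A y, ‖v z + 4 * u z ^ 2‖ ≤ (1 + 4 * u y) * ‖u z + v z‖ := by
    intro z hz
    have huz := hu0 z (hsub hz)
    have hvz := hv0 z (hsub hz)
    have hzy : u z ≤ u y := hmono (hsub hz) ⟨hx.1.trans hxy, hyB⟩ hz.2.le
    rw [Real.norm_of_nonneg (by positivity), Real.norm_of_nonneg (by positivity)]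
    nlinarith [mul_le_mul_of_nonneg_left hzy huz]
  have hsum := eqOn_zero_of_norm_deriv_le (f := fun z => u z + v z)
    (fun z hz => (hu z (hsub hz)).add (hv z (hsub hz))) hbound (by simpa using hulim.add hvlim)
    ⟨hx.1, hxy⟩
  simp only [Pi.zero_apply] at hsum ⊢
  linarith [hu0 x hx, hv0 x hx]

end QuadraticODE

/-- Boundary value problem `u'' = 4u²` on `(A,B)` with `u(A) = 0` and blow-up at `B`:
the first integral gives `∫₀^{u(x)} dt/√((8/3)t³ + (u'(A))²) = x − A`, and `u` is
strictly increasing on `(A,B)`. -/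
theorem ode_first_integral (A B : ℝ) (hAB : A < B) (u v : ℝ → ℝ)
    (hu' : ∀ x ∈ Ioo A B, HasDerivAt u (v x) x)
    (hv' : ∀ x ∈ Ioo A B, HasDerivAt v (4 * (u x) ^ 2) x)
    (hunn : ∀ x ∈ Ico A B, 0 ≤ u x)
    (hucont : ContinuousWithinAt u (Ici A) A)
    (hvcont : Tendsto v (nhdsWithin A (Ioi A)) (nhds (v A)))
    (huA : u A = 0)
    (hblow : Tendsto u (nhdsWithin B (Iio B)) atTop) :
    (∀ x ∈ Ioo A B,
      ∫ t in (0 : ℝ)..(u x), 1 / Real.sqrt ((8 / 3) * t ^ 3 + (v A) ^ 2) = x - A) ∧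
    StrictMonoOn u (Ioo A B) := by
  have hulim : Tendsto u (𝓝[>] A) (𝓝 0) :=
    huA ▸ hucont.tendsto.mono_left (nhdsWithin_mono A Ioi_subset_Ici_self)
  have hu0 : ∀ x ∈ Ioo A B, 0 ≤ u x := fun x hx => hunn x (Ioo_subset_Ico_self hx)
  have hv0 : ∀ x ∈ Ioo A B, 0 ≤ v x := nonneg_deriv_of_monotoneOn_of_tendsto_zero hu'
    (monotoneOn_Ioo_of_hasDerivAt_nonneg hv' fun x _ => by positivity) hu0 hulim
  have hvA : v A ≠ 0 := by
    intro hvA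
    obtain ⟨x, hux, hx⟩ := ((hblow.eventually_gt_atTop 0).and (Ioo_mem_nhdsLT hAB)).exists
    exact hux.ne' (eqOn_zero_of_tendsto_zero hu' hv' hu0 hv0 hulim (hvA ▸ hvcont) hx)
  have hpos : ∀ t : ℝ, 0 ≤ t → 0 < 8 / 3 * t ^ 3 + v A ^ 2 := fun t ht => by positivity
  have hv_eq : ∀ x ∈ Ioo A B, v x = √(8 / 3 * u x ^ 3 + v A ^ 2) := fun x hx => by
    rw [← sq_eq_cube_add_sq hu' hv' hulim hvcont x hx, Real.sqrt_sq (hv0 x hx)]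
  refine ⟨integral_one_div_eq_sub_of_hasDerivAt_comp (S := {t | 0 < 8 / 3 * t ^ 3 + v A ^ 2})
    (isOpen_lt continuous_const (by fun_prop)) (by fun_prop) (fun t ht => (Real.sqrt_pos.2 ht).ne')
    (fun x hx => (hu' x hx).congr_deriv (hv_eq x hx))
    (fun x hx => by rw [uIcc_of_le (hu0 x hx)]; exact fun t ht => hpos t ht.1)
    (hpos 0 le_rfl) hulim, ?_⟩
  exact strictMonoOn_Ioo_of_hasDerivAt_pos hu' fun x hx =>
    hv_eq x hx ▸ Real.sqrt_pos.2 (hpos _ (hu0 x hx))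
end

section
/- Let T be a real tree coded by a continuous excursion ζ : [0,1] → [0,∞) (ζ(0) = ζ(1) = 0), with projection p_ζ and root ρ = p_ζ(0), and let Γ : T → ℝ be continuous with Γ(ρ) = 0. Define D°(a, b) = Γ(a) + Γ(b) − 2 max{ min{Γ̂(r) : r ∈ [s∧s', s∨s']} : s, s' ∈ [0,1], p_ζ(s) = a, p_ζ(s') = b }, where Γ̂ = Γ ∘ p_ζ, and D(a,b) = inf{ Σ_{i=1}^p D°(a_{i−1}, a_i) : p ≥ 1, a₀ = a, a_p = b }. Then D is a pseudo-metric on T, D ≤ D°, and for all a, b ∈ T: D(a, b) ≥ Γ(a) + Γ(b) − 2 inf{Γ(c) : c ∈ [a, b]}, where [a, b] is the arc joining a and b in T. -/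
open Set

/-!
Write `m(s, t) = min_{[s, t]} ζ`, so that `d_ζ(s, t) = ζ s + ζ t - 2 m(s, t)`. The function `m`
behaves like a Gromov product on a tree: `m(a, c) ≥ min (m(a, b), m(b, c))` and `m(a, r) ≤ ζ r`.
From these two facts alone, `r` lies on the geodesic from `a` to `c` iff it is an ancestor of
`a` or of `c` (`m(a, r) = ζ r` or `m(c, r) = ζ r`) lying below their branch point
(`m(a, c) ≤ ζ r`). Hence `[a, c] ⊆ [a, b] ∪ [b, c]`, which gives the triangle inequality for the
cactus quantity `G a + G b - 2 inf_{[a, b]} G`. A last-passage argument for the continuous `ζ`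
shows that every point of the arc between `t` and `t'` is visited at a time between `t` and
`t'`, so `min_{[t, t']} G ≤ inf_{arc} G`: the cactus quantity is at most `D°`. Finally, the
chain infimum `D` of the nonnegative symmetric `D°` is a pseudometric below `D°` that dominates
every function below `D°` satisfying the triangle inequality.
-/

section Chain

variable {α : Type*}

def chainSums (S : Set α) (d : α → α → ℝ) (x y : α) : Set ℝ :=
  {v | ∃ n : ℕ, 0 < n ∧ ∃ a : ℕ → α, (∀ i ≤ n, a i ∈ S) ∧ a 0 = x ∧ a n = y ∧
    v = ∑ i ∈ Finset.range n, d (a i) (a (i + 1))}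

noncomputable def chainDist (S : Set α) (d : α → α → ℝ) (x y : α) : ℝ :=
  sInf (chainSums S d x y)

variable {S : Set α} {d : α → α → ℝ} {x y z : α}

theorem apply_mem_chainSums (hx : x ∈ S) (hy : y ∈ S) : d x y ∈ chainSums S d x y := by
  refine ⟨1, one_pos, fun i => if i = 0 then x else y, fun i _ => ?_, rfl, rfl, by simp⟩
  dsimp only
  split_ifs <;> assumption

theorem chainSums_nonempty (hx : x ∈ S) (hy : y ∈ S) : (chainSums S d x y).Nonempty :=
  ⟨d x y, apply_mem_chainSums hx hy⟩

theorem nonneg_of_mem_chainSums (hd : ∀ x ∈ S, ∀ y ∈ S, 0 ≤ d x y) {v : ℝ}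
    (hv : v ∈ chainSums S d x y) : 0 ≤ v := by
  obtain ⟨n, -, a, ha, -, -, rfl⟩ := hv
  exact Finset.sum_nonneg fun i hi =>
    hd _ (ha i (Finset.mem_range.1 hi).le) _ (ha (i + 1) (Finset.mem_range.1 hi))

theorem bddBelow_chainSums (hd : ∀ x ∈ S, ∀ y ∈ S, 0 ≤ d x y) :
    BddBelow (chainSums S d x y) :=
  ⟨0, fun _ hv => nonneg_of_mem_chainSums hd hv⟩

theorem chainSums_subset_swap (hd : ∀ x ∈ S, ∀ y ∈ S, d x y = d y x) :
    chainSums S d x y ⊆ chainSums S d y x := by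
  rintro _ ⟨n, hn, a, ha, ha0, han, rfl⟩
  refine ⟨n, hn, fun i => a (n - i), fun i _ => ha _ (Nat.sub_le n i), by simpa using han,
    by simpa using ha0, ?_⟩
  rw [← Finset.sum_range_reflect]
  refine Finset.sum_congr rfl fun i hi => ?_
  have hi : i < n := Finset.mem_range.1 hi
  dsimp only
  rw [show n - 1 - i + 1 = n - i by omega, show n - (i + 1) = n - 1 - i by omega]
  exact hd _ (ha _ (by omega)) _ (ha _ (by omega))

theorem add_mem_chainSums {v w : ℝ} (hv : v ∈ chainSums S d x y)
    (hw : w ∈ chainSums S d y z) : v + w ∈ chainSums S d x z := by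
  obtain ⟨n, hn, a, ha, ha0, han, rfl⟩ := hv
  obtain ⟨p, hp, b, hb, hb0, hbp, rfl⟩ := hw
  set c : ℕ → α := fun i => if i < n then a i else b (i - n)
  have hca : ∀ i ≤ n, c i = a i := by
    intro i hi
    rcases hi.lt_or_eq with hi | rfl
    · simp [c, hi]
    · simp [c, hb0, han]
  have hcb : ∀ i, c (n + i) = b i := by simp [c]
  refine ⟨n + p, by omega, c, fun i hi => ?_, by rw [hca 0 hn.le, ha0], by rw [hcb, hbp], ?_⟩
  · by_cases hin : i < n
    · exact hca i hin.le ▸ ha i hin.le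
    · simpa [c, hin] using hb (i - n) (by omega)
  · rw [Finset.sum_range_add]
    congr 1
    · exact Finset.sum_congr rfl fun i hi => by
        rw [hca i (Finset.mem_range.1 hi).le, hca (i + 1) (Finset.mem_range.1 hi)]
    · exact Finset.sum_congr rfl fun i _ => by rw [hcb, add_assoc, hcb]

theorem chainDist_nonneg (hd : ∀ x ∈ S, ∀ y ∈ S, 0 ≤ d x y) (hx : x ∈ S) (hy : y ∈ S) :
    0 ≤ chainDist S d x y :=
  le_csInf (chainSums_nonempty hx hy) fun _ hv => nonneg_of_mem_chainSums hd hv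

theorem chainDist_le (hd : ∀ x ∈ S, ∀ y ∈ S, 0 ≤ d x y) (hx : x ∈ S) (hy : y ∈ S) :
    chainDist S d x y ≤ d x y :=
  csInf_le (bddBelow_chainSums hd) (apply_mem_chainSums hx hy)

theorem chainDist_self (hd : ∀ x ∈ S, ∀ y ∈ S, 0 ≤ d x y) (hx : x ∈ S) (hdx : d x x = 0) :
    chainDist S d x x = 0 :=
  le_antisymm ((chainDist_le hd hx hx).trans_eq hdx) (chainDist_nonneg hd hx hx)

theorem chainDist_comm (hd : ∀ x ∈ S, ∀ y ∈ S, d x y = d y x) :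
    chainDist S d x y = chainDist S d y x := by
  rw [chainDist, chainDist, (chainSums_subset_swap hd).antisymm (chainSums_subset_swap hd)]

theorem chainDist_triangle (hd : ∀ x ∈ S, ∀ y ∈ S, 0 ≤ d x y) (hx : x ∈ S) (hy : y ∈ S)
    (hz : z ∈ S) : chainDist S d x z ≤ chainDist S d x y + chainDist S d y z := by
  rw [chainDist, chainDist, chainDist, ← csInf_add (chainSums_nonempty hx hy)
    (bddBelow_chainSums hd) (chainSums_nonempty hy hz) (bddBelow_chainSums hd)]
  refine csInf_le_csInf (bddBelow_chainSums hd)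
    ((chainSums_nonempty hx hy).add (chainSums_nonempty hy hz)) ?_
  rintro _ ⟨v, hv, w, hw, rfl⟩
  exact add_mem_chainSums hv hw

theorem le_chainDist_of_triangle {Φ : α → α → ℝ} (hΦd : ∀ x ∈ S, ∀ y ∈ S, Φ x y ≤ d x y)
    (hΦ : ∀ x ∈ S, ∀ y ∈ S, ∀ z ∈ S, Φ x z ≤ Φ x y + Φ y z) (hx : x ∈ S) (hy : y ∈ S) :
    Φ x y ≤ chainDist S d x y := by
  refine le_csInf (chainSums_nonempty hx hy) ?_
  rintro _ ⟨n, hn, a, ha, rfl, rfl, rfl⟩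
  induction n, hn using Nat.le_induction with
  | base => simpa using hΦd _ (ha 0 (by omega)) _ (ha 1 le_rfl)
  | succ n hn ih =>
    rw [Finset.sum_range_succ]
    have := hΦ _ (ha 0 (by omega)) _ (ha n (by omega)) _ (ha (n + 1) le_rfl)
    linarith [ih (fun i hi => ha i (by omega)) (ha n (by omega)),
      hΦd _ (ha n (by omega)) _ (ha (n + 1) le_rfl)]

end Chain

theorem ContinuousOn.exists_mem_uIcc_eq_forall_le {f : ℝ → ℝ} {a b y : ℝ}
    (hf : ContinuousOn f (uIcc a b)) (ha : f a ≤ y) (hb : y ≤ f b) :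
    ∃ c ∈ uIcc a b, f c = y ∧ ∀ x ∈ uIcc c b, y ≤ f x := by
  -- `c` is the point of the sublevel set `{f ≤ y}` closest to `b`
  have hS : IsCompact (uIcc a b ∩ f ⁻¹' Iic y) :=
    isCompact_uIcc.of_isClosed_subset
      (hf.preimage_isClosed_of_isClosed isCompact_uIcc.isClosed isClosed_Iic) inter_subset_left
  obtain ⟨c, ⟨hc, hcy⟩, hmin⟩ := hS.exists_isMinOn ⟨a, left_mem_uIcc, ha⟩
    (f := fun x => |x - b|) (by fun_prop)
  have hcb : uIcc c b ⊆ uIcc a b := uIcc_subset_uIcc hc right_mem_uIcc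
  have eq_of_le : ∀ x ∈ uIcc c b, f x ≤ y → x = c := by
    intro x hx hxy
    have h : |c - b| ≤ |x - b| := hmin ⟨hcb hx, hxy⟩
    rcases mem_uIcc.1 hx with hx | hx <;>
      cases abs_cases (c - b) <;> cases abs_cases (x - b) <;> linarith
  obtain ⟨v, hv, hfv⟩ := intermediate_value_uIcc (hf.mono hcb) (mem_uIcc.2 (.inl ⟨hcy, hb⟩))
  have hfc : f c = y := eq_of_le v hv hfv.le ▸ hfv
  exact ⟨c, hc, hfc, fun x hx => le_of_not_gt fun hxy => hxy.ne (eq_of_le x hx hxy.le ▸ hfc)⟩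

noncomputable def intervalInf (f : ℝ → ℝ) (a b : ℝ) : ℝ :=
  sInf (f '' uIcc a b)

section IntervalInf

variable {f : ℝ → ℝ} {a b c x : ℝ}

theorem intervalInf_comm (f : ℝ → ℝ) (a b : ℝ) : intervalInf f a b = intervalInf f b a := by
  rw [intervalInf, uIcc_comm, intervalInf]

@[simp]
theorem intervalInf_self (f : ℝ → ℝ) (a : ℝ) : intervalInf f a a = f a := by
  simp [intervalInf]

theorem le_intervalInf (h : ∀ x ∈ uIcc a b, c ≤ f x) : c ≤ intervalInf f a b :=
  le_csInf (nonempty_uIcc.image f) (forall_mem_image.2 h)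

variable {I : Set ℝ} [I.OrdConnected]

theorem isCompact_image_uIcc (hf : ContinuousOn f I) (ha : a ∈ I) (hb : b ∈ I) :
    IsCompact (f '' uIcc a b) :=
  isCompact_uIcc.image_of_continuousOn (hf.mono (OrdConnected.uIcc_subset ‹_› ha hb))

theorem intervalInf_le (hf : ContinuousOn f I) (ha : a ∈ I) (hb : b ∈ I) (hx : x ∈ uIcc a b) :
    intervalInf f a b ≤ f x :=
  csInf_le (isCompact_image_uIcc hf ha hb).bddBelow (mem_image_of_mem f hx)

theorem intervalInf_le_left (hf : ContinuousOn f I) (ha : a ∈ I) (hb : b ∈ I) :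
    intervalInf f a b ≤ f a :=
  intervalInf_le hf ha hb left_mem_uIcc

theorem intervalInf_le_right (hf : ContinuousOn f I) (ha : a ∈ I) (hb : b ∈ I) :
    intervalInf f a b ≤ f b :=
  intervalInf_le hf ha hb right_mem_uIcc

theorem exists_mem_uIcc_eq_intervalInf (hf : ContinuousOn f I) (ha : a ∈ I) (hb : b ∈ I) :
    ∃ x ∈ uIcc a b, f x = intervalInf f a b :=
  (isCompact_image_uIcc hf ha hb).sInf_mem (nonempty_uIcc.image f)

theorem min_intervalInf_le (hf : ContinuousOn f I) (ha : a ∈ I) (hb : b ∈ I) (hc : c ∈ I) :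
    min (intervalInf f a b) (intervalInf f b c) ≤ intervalInf f a c :=
  le_intervalInf fun _ hx => (uIcc_subset_uIcc_union_uIcc hx).elim
    (fun hx => (min_le_left _ _).trans (intervalInf_le hf ha hb hx))
    (fun hx => (min_le_right _ _).trans (intervalInf_le hf hb hc hx))

end IntervalInf

noncomputable def treeDist (ζ : ℝ → ℝ) (s t : ℝ) : ℝ :=
  ζ s + ζ t - 2 * intervalInf ζ s t

def treeArc (I : Set ℝ) (ζ : ℝ → ℝ) (s t : ℝ) : Set ℝ :=
  {r ∈ I | treeDist ζ s r + treeDist ζ r t = treeDist ζ s t}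

section TreeDist

variable {ζ : ℝ → ℝ} {I : Set ℝ} {a b c r s t : ℝ}

theorem treeDist_comm (ζ : ℝ → ℝ) (s t : ℝ) : treeDist ζ s t = treeDist ζ t s := by
  rw [treeDist, treeDist, intervalInf_comm]; ring

@[simp]
theorem treeDist_self (ζ : ℝ → ℝ) (s : ℝ) : treeDist ζ s s = 0 := by
  simp [treeDist]; ring

theorem left_mem_treeArc (hs : s ∈ I) : s ∈ treeArc I ζ s t :=
  ⟨hs, by simp⟩

theorem right_mem_treeArc (ht : t ∈ I) : t ∈ treeArc I ζ s t :=
  ⟨ht, by simp⟩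

variable [I.OrdConnected]

theorem treeDist_triangle (hζ : ContinuousOn ζ I) (hs : s ∈ I) (ht : t ∈ I) (hr : r ∈ I) :
    treeDist ζ s r ≤ treeDist ζ s t + treeDist ζ t r := by
  have := intervalInf_le_right hζ hs ht
  have := intervalInf_le_left hζ ht hr
  rw [treeDist, treeDist, treeDist]
  rcases min_le_iff.1 (min_intervalInf_le hζ hs ht hr) with h | h <;> linarith

theorem treeDist_eq_of_treeDist_eq_zero (hζ : ContinuousOn ζ I) (hs : s ∈ I) (ht : t ∈ I)
    (hr : r ∈ I) (h : treeDist ζ s t = 0) : treeDist ζ s r = treeDist ζ t r := by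
  have := treeDist_triangle hζ hs ht hr
  have := treeDist_triangle hζ ht hs hr
  rw [treeDist_comm ζ t s] at *
  linarith

theorem mem_treeArc_iff (hζ : ContinuousOn ζ I) (ha : a ∈ I) (hc : c ∈ I) :
    r ∈ treeArc I ζ a c ↔
      r ∈ I ∧ (intervalInf ζ a r = ζ r ∨ intervalInf ζ c r = ζ r) ∧ intervalInf ζ a c ≤ ζ r := by
  refine and_congr_right fun hr => ?_
  have := intervalInf_le_right hζ ha hr
  have := intervalInf_le_right hζ hc hr
  have h₁ := min_intervalInf_le hζ ha hr hc
  have h₂ := min_intervalInf_le hζ ha hc hr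
  have h₃ := min_intervalInf_le hζ hc ha hr
  rw [intervalInf_comm ζ r c] at h₁
  rw [intervalInf_comm ζ c a] at h₃
  rw [treeDist, treeDist, treeDist, intervalInf_comm ζ r c]
  constructor
  · intro h
    rcases min_le_iff.1 h₁ with h₁ | h₁
    · exact ⟨.inr (by linarith), by linarith⟩
    · exact ⟨.inl (by linarith), by linarith⟩
  · rintro ⟨h | h, hM⟩ <;>
      rcases min_le_iff.1 h₁ with h₁ | h₁ <;> rcases min_le_iff.1 h₂ with h₂ | h₂ <;>
      rcases min_le_iff.1 h₃ with h₃ | h₃ <;> linarith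

theorem treeArc_subset_union (hζ : ContinuousOn ζ I) (ha : a ∈ I) (hb : b ∈ I) (hc : c ∈ I) :
    treeArc I ζ a c ⊆ treeArc I ζ a b ∪ treeArc I ζ b c := by
  intro r hr
  obtain ⟨hr, hanc, hM⟩ := (mem_treeArc_iff hζ ha hc).1 hr
  rw [mem_union, mem_treeArc_iff hζ ha hb, mem_treeArc_iff hζ hb hc]
  have hac := min_intervalInf_le hζ ha hb hc
  have hbr₁ := min_intervalInf_le hζ hb ha hr
  have hbr₂ := min_intervalInf_le hζ hb hc hr
  have hbr := intervalInf_le_right hζ hb hr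
  rw [intervalInf_comm ζ b a] at hbr₁
  rcases hanc with h | h
  · by_cases hab : intervalInf ζ a b ≤ ζ r
    · exact .inl ⟨hr, .inl h, hab⟩
    refine .inr ⟨hr, .inl (le_antisymm hbr ?_), ?_⟩
    · rcases min_le_iff.1 hbr₁ with h' | h' <;> linarith
    · rcases min_le_iff.1 hac with h' | h' <;> linarith
  · by_cases hbc : intervalInf ζ b c ≤ ζ r
    · exact .inr ⟨hr, .inr h, hbc⟩
    refine .inl ⟨hr, .inr (le_antisymm hbr ?_), ?_⟩
    · rcases min_le_iff.1 hbr₂ with h' | h' <;> linarith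
    · rcases min_le_iff.1 hac with h' | h' <;> linarith

theorem treeArc_subset_treeArc_of_treeDist_eq_zero (hζ : ContinuousOn ζ I) {s' t' : ℝ}
    (hs : s ∈ I) (hs' : s' ∈ I) (ht : t ∈ I) (ht' : t' ∈ I) (hts : treeDist ζ t s = 0)
    (hts' : treeDist ζ t' s' = 0) : treeArc I ζ s s' ⊆ treeArc I ζ t t' := by
  rintro r ⟨hr, h⟩
  refine ⟨hr, ?_⟩
  rwa [treeDist_eq_of_treeDist_eq_zero hζ ht hs hr hts, treeDist_comm ζ r t',
    treeDist_eq_of_treeDist_eq_zero hζ ht' hs' hr hts',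
    treeDist_eq_of_treeDist_eq_zero hζ ht hs ht' hts, treeDist_comm ζ s t',
    treeDist_eq_of_treeDist_eq_zero hζ ht' hs' hs hts', treeDist_comm ζ s' s,
    treeDist_comm ζ s' r]

theorem exists_mem_uIcc_treeDist_eq_zero (hζ : ContinuousOn ζ I) {t' : ℝ} (ht : t ∈ I)
    (ht' : t' ∈ I) (hr : r ∈ treeArc I ζ t t') : ∃ u ∈ uIcc t t', treeDist ζ u r = 0 := by
  obtain ⟨hrI, hanc, hM⟩ := (mem_treeArc_iff hζ ht ht').1 hr
  clear hr
  wlog hanc_t : intervalInf ζ t r = ζ r generalizing t t'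
  · rw [uIcc_comm]
    exact this ht' ht hanc.symm (intervalInf_comm ζ t t' ▸ hM) (hanc.resolve_left hanc_t)
  -- `u` is the last time between a minimiser `x₀` of `ζ` on `[t, t']` and `t` with `ζ u = ζ r`
  obtain ⟨x₀, hx₀, hx₀_eq⟩ := exists_mem_uIcc_eq_intervalInf hζ ht ht'
  have hx₀I : x₀ ∈ I := OrdConnected.uIcc_subset ‹_› ht ht' hx₀
  obtain ⟨u, hu, hζu, hle⟩ :=
    (hζ.mono (OrdConnected.uIcc_subset ‹_› hx₀I ht)).exists_mem_uIcc_eq_forall_le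
      (hx₀_eq.trans_le hM) (hanc_t ▸ intervalInf_le_left hζ ht hrI)
  have hut : u ∈ uIcc t t' := uIcc_subset_uIcc hx₀ left_mem_uIcc hu
  have huI : u ∈ I := OrdConnected.uIcc_subset ‹_› ht ht' hut
  have hur : ζ r ≤ intervalInf ζ u r :=
    (le_min (le_intervalInf hle) hanc_t.ge).trans (min_intervalInf_le hζ huI ht hrI)
  refine ⟨u, hut, ?_⟩
  rw [treeDist]
  linarith [intervalInf_le_left hζ huI hrI]

end TreeDist

def repIntervalInfs (I : Set ℝ) (ζ G : ℝ → ℝ) (s s' : ℝ) : Set ℝ :=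
  {m | ∃ t ∈ I, ∃ t' ∈ I, treeDist ζ t s = 0 ∧ treeDist ζ t' s' = 0 ∧ m = intervalInf G t t'}

noncomputable def labelPreDist (I : Set ℝ) (ζ G : ℝ → ℝ) (s s' : ℝ) : ℝ :=
  G s + G s' - 2 * sSup (repIntervalInfs I ζ G s s')

noncomputable def cactusBound (I : Set ℝ) (ζ G : ℝ → ℝ) (s s' : ℝ) : ℝ :=
  G s + G s' - 2 * sInf (G '' treeArc I ζ s s')

section Labels

variable {ζ G : ℝ → ℝ} {I : Set ℝ} {m r s s' s'' : ℝ}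

theorem intervalInf_mem_repIntervalInfs (hs : s ∈ I) (hs' : s' ∈ I) :
    intervalInf G s s' ∈ repIntervalInfs I ζ G s s' :=
  ⟨s, hs, s', hs', treeDist_self ζ s, treeDist_self ζ s', rfl⟩

theorem repIntervalInfs_comm (I : Set ℝ) (ζ G : ℝ → ℝ) (s s' : ℝ) :
    repIntervalInfs I ζ G s s' = repIntervalInfs I ζ G s' s := by
  have key : ∀ s s', repIntervalInfs I ζ G s s' ⊆ repIntervalInfs I ζ G s' s := by
    rintro s s' _ ⟨t, ht, t', ht', hts, hts', rfl⟩
    exact ⟨t', ht', t, ht, hts', hts, intervalInf_comm G t t'⟩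
  exact (key s s').antisymm (key s' s)

theorem labelPreDist_comm (I : Set ℝ) (ζ G : ℝ → ℝ) (s s' : ℝ) :
    labelPreDist I ζ G s s' = labelPreDist I ζ G s' s := by
  rw [labelPreDist, labelPreDist, repIntervalInfs_comm]; ring

variable [I.OrdConnected]

theorem le_min_of_mem_repIntervalInfs (hG : ContinuousOn G I)
    (hGζ : ∀ s ∈ I, ∀ t ∈ I, treeDist ζ s t = 0 → G s = G t) (hs : s ∈ I) (hs' : s' ∈ I)
    (hm : m ∈ repIntervalInfs I ζ G s s') : m ≤ min (G s) (G s') := by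
  obtain ⟨t, ht, t', ht', hts, hts', rfl⟩ := hm
  exact le_min (hGζ t ht s hs hts ▸ intervalInf_le_left hG ht ht')
    (hGζ t' ht' s' hs' hts' ▸ intervalInf_le_right hG ht ht')

theorem sSup_repIntervalInfs_le (hG : ContinuousOn G I)
    (hGζ : ∀ s ∈ I, ∀ t ∈ I, treeDist ζ s t = 0 → G s = G t) (hs : s ∈ I) (hs' : s' ∈ I) :
    sSup (repIntervalInfs I ζ G s s') ≤ min (G s) (G s') :=
  csSup_le ⟨_, intervalInf_mem_repIntervalInfs hs hs'⟩ fun _ hm =>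
    le_min_of_mem_repIntervalInfs hG hGζ hs hs' hm

theorem labelPreDist_nonneg (hG : ContinuousOn G I)
    (hGζ : ∀ s ∈ I, ∀ t ∈ I, treeDist ζ s t = 0 → G s = G t) (hs : s ∈ I) (hs' : s' ∈ I) :
    0 ≤ labelPreDist I ζ G s s' := by
  have := sSup_repIntervalInfs_le hG hGζ hs hs'
  rw [labelPreDist]
  linarith [min_le_left (G s) (G s'), min_le_right (G s) (G s')]

theorem labelPreDist_self (hG : ContinuousOn G I)
    (hGζ : ∀ s ∈ I, ∀ t ∈ I, treeDist ζ s t = 0 → G s = G t) (hs : s ∈ I) :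
    labelPreDist I ζ G s s = 0 := by
  have hsup : sSup (repIntervalInfs I ζ G s s) = G s := by
    refine le_antisymm ((sSup_repIntervalInfs_le hG hGζ hs hs).trans (min_le_left _ _)) ?_
    refine intervalInf_self G s ▸ le_csSup ⟨G s, fun _ hm => ?_⟩
      (intervalInf_mem_repIntervalInfs hs hs)
    exact (le_min_of_mem_repIntervalInfs hG hGζ hs hs hm).trans (min_le_left _ _)
  rw [labelPreDist, hsup]; ring

theorem le_of_mem_repIntervalInfs_of_mem_treeArc (hζ : ContinuousOn ζ I)
    (hG : ContinuousOn G I) (hGζ : ∀ s ∈ I, ∀ t ∈ I, treeDist ζ s t = 0 → G s = G t)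
    (hs : s ∈ I) (hs' : s' ∈ I) (hm : m ∈ repIntervalInfs I ζ G s s')
    (hr : r ∈ treeArc I ζ s s') : m ≤ G r := by
  obtain ⟨t, ht, t', ht', hts, hts', rfl⟩ := hm
  obtain ⟨u, hu, hur⟩ := exists_mem_uIcc_treeDist_eq_zero hζ ht ht'
    (treeArc_subset_treeArc_of_treeDist_eq_zero hζ hs hs' ht ht' hts hts' hr)
  exact (intervalInf_le hG ht ht' hu).trans_eq
    (hGζ u (OrdConnected.uIcc_subset ‹_› ht ht' hu) r hr.1 hur)

theorem sInf_image_treeArc_le (hζ : ContinuousOn ζ I) (hG : ContinuousOn G I)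
    (hGζ : ∀ s ∈ I, ∀ t ∈ I, treeDist ζ s t = 0 → G s = G t) (hs : s ∈ I) (hs' : s' ∈ I)
    (hr : r ∈ treeArc I ζ s s') : sInf (G '' treeArc I ζ s s') ≤ G r :=
  csInf_le ⟨intervalInf G s s', forall_mem_image.2 fun _ hr =>
      le_of_mem_repIntervalInfs_of_mem_treeArc hζ hG hGζ hs hs'
        (intervalInf_mem_repIntervalInfs hs hs') hr⟩
    (mem_image_of_mem G hr)

theorem cactusBound_le_labelPreDist (hζ : ContinuousOn ζ I) (hG : ContinuousOn G I)
    (hGζ : ∀ s ∈ I, ∀ t ∈ I, treeDist ζ s t = 0 → G s = G t) (hs : s ∈ I) (hs' : s' ∈ I) :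
    cactusBound I ζ G s s' ≤ labelPreDist I ζ G s s' := by
  have : sSup (repIntervalInfs I ζ G s s') ≤ sInf (G '' treeArc I ζ s s') :=
    csSup_le ⟨_, intervalInf_mem_repIntervalInfs hs hs'⟩ fun _ hm =>
      le_csInf ⟨G s, mem_image_of_mem G (left_mem_treeArc hs)⟩ <| forall_mem_image.2
        fun _ hr => le_of_mem_repIntervalInfs_of_mem_treeArc hζ hG hGζ hs hs' hm hr
  rw [cactusBound, labelPreDist]
  linarith

theorem cactusBound_triangle (hζ : ContinuousOn ζ I) (hG : ContinuousOn G I)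
    (hGζ : ∀ s ∈ I, ∀ t ∈ I, treeDist ζ s t = 0 → G s = G t) (hs : s ∈ I) (hs' : s' ∈ I)
    (hs'' : s'' ∈ I) :
    cactusBound I ζ G s s'' ≤ cactusBound I ζ G s s' + cactusBound I ζ G s' s'' := by
  have h₁ := sInf_image_treeArc_le hζ hG hGζ hs hs' (right_mem_treeArc hs')
  have h₂ := sInf_image_treeArc_le hζ hG hGζ hs' hs'' (left_mem_treeArc hs')
  have h₃ : min (sInf (G '' treeArc I ζ s s')) (sInf (G '' treeArc I ζ s' s'')) ≤
      sInf (G '' treeArc I ζ s s'') :=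
    le_csInf ⟨G s, mem_image_of_mem G (left_mem_treeArc hs)⟩ <| forall_mem_image.2 fun _ hr =>
      (treeArc_subset_union hζ hs hs' hs'' hr).elim
        (fun hr => (min_le_left _ _).trans (sInf_image_treeArc_le hζ hG hGζ hs hs' hr))
        (fun hr => (min_le_right _ _).trans (sInf_image_treeArc_le hζ hG hGζ hs' hs'' hr))
  rw [cactusBound, cactusBound, cactusBound]
  rcases min_le_iff.1 h₃ with h₃ | h₃ <;> linarith

end Labels

theorem brownian_map_pseudometric_cactus_bound_general
    (ζ G : ℝ → ℝ)
    (hζc : ContinuousOn ζ (Icc 0 1))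
    (hGc : ContinuousOn G (Icc 0 1))
    (dζ : ℝ → ℝ → ℝ)
    (hdζ : ∀ s s', dζ s s' = ζ s + ζ s' - 2 * sInf (ζ '' Icc (min s s') (max s s')))
    (hGcompat : ∀ s ∈ Icc (0 : ℝ) 1, ∀ s' ∈ Icc (0 : ℝ) 1, dζ s s' = 0 → G s = G s')
    (D₀ : ℝ → ℝ → ℝ)
    (hD₀ : ∀ s s', D₀ s s' = G s + G s' - 2 * sSup {m : ℝ |
      ∃ t ∈ Icc (0 : ℝ) 1, ∃ t' ∈ Icc (0 : ℝ) 1, dζ t s = 0 ∧ dζ t' s' = 0 ∧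
        m = sInf (G '' Icc (min t t') (max t t'))})
    (D : ℝ → ℝ → ℝ)
    (hD : ∀ s s', D s s' = sInf {x : ℝ | ∃ n : ℕ, 0 < n ∧ ∃ a : ℕ → ℝ,
      (∀ i ≤ n, a i ∈ Icc (0 : ℝ) 1) ∧ a 0 = s ∧ a n = s' ∧
      x = ∑ i ∈ Finset.range n, D₀ (a i) (a (i + 1))})
    (Arc : ℝ → ℝ → Set ℝ)
    (hArc : ∀ s s', Arc s s' = {r ∈ Icc (0 : ℝ) 1 | dζ s r + dζ r s' = dζ s s'}) :
    ∀ s ∈ Icc (0 : ℝ) 1, ∀ s' ∈ Icc (0 : ℝ) 1, ∀ s'' ∈ Icc (0 : ℝ) 1,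
      0 ≤ D s s' ∧ D s s = 0 ∧ D s s' = D s' s ∧
      D s s'' ≤ D s s' + D s' s'' ∧
      D s s' ≤ D₀ s s' ∧
      G s + G s' - 2 * sInf (G '' Arc s s') ≤ D s s' := by
  obtain rfl : dζ = treeDist ζ := by
    funext s s'
    rw [hdζ, Icc_min_max]
    rfl
  obtain rfl : Arc = treeArc (Icc 0 1) ζ := funext₂ hArc
  simp only [Icc_min_max] at hD₀
  obtain rfl : D₀ = labelPreDist (Icc 0 1) ζ G := funext₂ hD₀
  obtain rfl : D = chainDist (Icc 0 1) (labelPreDist (Icc 0 1) ζ G) := funext₂ hD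
  have hD₀_nonneg :
      ∀ s ∈ Icc (0 : ℝ) 1, ∀ s' ∈ Icc (0 : ℝ) 1, 0 ≤ labelPreDist (Icc 0 1) ζ G s s' :=
    fun _ hs _ hs' => labelPreDist_nonneg hGc hGcompat hs hs'
  intro s hs s' hs' s'' hs''
  exact ⟨chainDist_nonneg hD₀_nonneg hs hs',
    chainDist_self hD₀_nonneg hs (labelPreDist_self hGc hGcompat hs),
    chainDist_comm fun _ _ _ _ => labelPreDist_comm _ _ _ _ _,
    chainDist_triangle hD₀_nonneg hs hs' hs'',
    chainDist_le hD₀_nonneg hs hs',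
    le_chainDist_of_triangle (Φ := cactusBound (Icc 0 1) ζ G)
      (fun _ ha _ hb => cactusBound_le_labelPreDist hζc hGc hGcompat ha hb)
      (fun _ ha _ hb _ hc => cactusBound_triangle hζc hGc hGcompat ha hb hc) hs hs'⟩

/-- Brownian-map-type pseudo-metric built from a tree coded by an excursion `ζ` on
`[0,1]` and a label function `Γ` (given on `[0,1]` through `G = Γ ∘ p_ζ`, constant on
the equivalence classes of the tree): `D` is a pseudo-metric, `D ≤ D°`, and the cactus
lower bound `D(a,b) ≥ Γ(a) + Γ(b) − 2 inf_{[a,b]} Γ` holds, where the arc `[a,b]` in the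
coded tree is the set of points `r` lying on the `d_ζ`-geodesic from `a` to `b`. -/
theorem brownian_map_pseudometric_cactus_bound
    (ζ G : ℝ → ℝ)
    (hζc : ContinuousOn ζ (Icc 0 1)) (hζnn : ∀ s ∈ Icc (0 : ℝ) 1, 0 ≤ ζ s)
    (hζ0 : ζ 0 = 0) (hζ1 : ζ 1 = 0)
    (hGc : ContinuousOn G (Icc 0 1)) (hG0 : G 0 = 0)
    (dζ : ℝ → ℝ → ℝ)
    (hdζ : ∀ s s', dζ s s' = ζ s + ζ s' - 2 * sInf (ζ '' Icc (min s s') (max s s')))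
    (hGcompat : ∀ s ∈ Icc (0 : ℝ) 1, ∀ s' ∈ Icc (0 : ℝ) 1, dζ s s' = 0 → G s = G s')
    (D₀ : ℝ → ℝ → ℝ)
    (hD₀ : ∀ s s', D₀ s s' = G s + G s' - 2 * sSup {m : ℝ |
      ∃ t ∈ Icc (0 : ℝ) 1, ∃ t' ∈ Icc (0 : ℝ) 1, dζ t s = 0 ∧ dζ t' s' = 0 ∧
        m = sInf (G '' Icc (min t t') (max t t'))})
    (D : ℝ → ℝ → ℝ)
    (hD : ∀ s s', D s s' = sInf {x : ℝ | ∃ n : ℕ, 0 < n ∧ ∃ a : ℕ → ℝ,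
      (∀ i ≤ n, a i ∈ Icc (0 : ℝ) 1) ∧ a 0 = s ∧ a n = s' ∧
      x = ∑ i ∈ Finset.range n, D₀ (a i) (a (i + 1))})
    (Arc : ℝ → ℝ → Set ℝ)
    (hArc : ∀ s s', Arc s s' = {r ∈ Icc (0 : ℝ) 1 | dζ s r + dζ r s' = dζ s s'}) :
    ∀ s ∈ Icc (0 : ℝ) 1, ∀ s' ∈ Icc (0 : ℝ) 1, ∀ s'' ∈ Icc (0 : ℝ) 1,
      0 ≤ D s s' ∧ D s s = 0 ∧ D s s' = D s' s ∧
      D s s'' ≤ D s s' + D s' s'' ∧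
      D s s' ≤ D₀ s s' ∧
      G s + G s' - 2 * sInf (G '' Arc s s') ≤ D s s' :=
  brownian_map_pseudometric_cactus_bound_general ζ G hζc hGc dζ hdζ hGcompat D₀ hD₀ D hD Arc hArc
end
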